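/- arXiv:1907.12057 — 3 statements merged into one kernel-verified Lean document; each statement's English description precedes it below -/
import Mathlib

section
/- Let K be a number field, S a finite set of finite places of K, and f ∈ K[X] a polynomial of degree d ≥ 2. If the set V(K,f,S) = {α ∈ K : there exist an integer n ≥ 1, an integer ℓ with ℓ ≠ 0 and ℓ ≠ 1, and a ∈ R_S (with a ≠ 0 if ℓ < 0) such that f^(n)(α) = a^ℓ · α} is finite, then the set Ṽ(K,f,S) = {α ∈ K : there exist integers n ≥ 1 and k ≥ 0, an integer ℓ with ℓ ≠ 0 and ℓ ≠ 1, and a ∈ R_S (with a ≠ 0 if ℓ < 0) such that f^(n+k)(α) = a^ℓ · f^(k)(α)} is also finite. -/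
/-!
Once `v z` exceeds an explicit escape radius, every absolute value `v` of `K` strictly increases
along `z ↦ f z` (this needs `deg f ≥ 2`). A point of the backward orbit of `β` therefore satisfies
`v α ≤ max (radius) (v β)` at every place. At all but finitely many nonarchimedean places the
coefficients of `f` are integral and its leading coefficient is a unit, so the radius is `1`; hence
the backward orbit has bounded height and is finite by Northcott's theorem. Finally, every point
of `Ṽ` lands in `V` after `k` steps, so `Ṽ` lies in the union of the backward orbits of the
finitely many points of `V`.
-/

open Polynomial IsDedekindDomain

/-- `x` is an `S`-integer of the number field `K`: its valuation is non-negative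
(multiplicatively, `≤ 1`) at every finite place outside `S`. -/
def IsSInteger (K : Type*) [Field K] [NumberField K]
    (S : Finset (HeightOneSpectrum (NumberField.RingOfIntegers K))) (x : K) : Prop :=
  ∀ v : HeightOneSpectrum (NumberField.RingOfIntegers K), v ∉ S → v.valuation K x ≤ 1

open Finset Height AdmissibleAbsValues

theorem Function.le_max_apply_iterate {α β : Type*} [LinearOrder β] {g : α → α} {φ : α → β}
    {t : β} (hg : ∀ z, t < φ z → φ z < φ (g z)) (a : α) (k : ℕ) :
    φ a ≤ max t (φ (g^[k] a)) := by
  by_contra! h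
  have hgrow : ∀ j, φ a ≤ φ (g^[j] a) := by
    intro j
    induction j with
    | zero => rfl
    | succ j ih =>
      rw [Function.iterate_succ_apply']
      exact ih.trans (hg _ ((max_lt_iff.mp h).1.trans_le ih)).le
  exact (hgrow k).not_gt (max_lt_iff.mp h).2

section

variable {K : Type*} [Field K]

namespace Polynomial

noncomputable def escapeRadius (v : AbsoluteValue K ℝ) (f : K[X]) : ℝ :=
  (f.natDegree * f.gaussNorm v 1 + 1) * v f.leadingCoeff⁻¹

noncomputable def nonarchEscapeRadius (v : AbsoluteValue K ℝ) (f : K[X]) : ℝ :=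
  max (f.gaussNorm v 1) 1 * v f.leadingCoeff⁻¹

theorem apply_coeff_le_gaussNorm (v : AbsoluteValue K ℝ) (f : K[X]) (i : ℕ) :
    v (f.coeff i) ≤ f.gaussNorm v 1 := by
  simpa using f.le_gaussNorm v zero_le_one i

theorem lt_apply_leadingCoeff_mul_of_mul_inv_lt {v : AbsoluteValue K ℝ} {f : K[X]} (hf : f ≠ 0)
    {r : ℝ} {z : K} (hz : r * v f.leadingCoeff⁻¹ < v z) : r < v f.leadingCoeff * v z := by
  have hlc : 0 < v f.leadingCoeff := v.pos (leadingCoeff_ne_zero.mpr hf)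
  rwa [map_inv₀, ← div_eq_mul_inv, div_lt_iff₀ hlc, mul_comm] at hz

end Polynomial

theorem AbsoluteValue.lt_apply_eval_of_escapeRadius_lt (v : AbsoluteValue K ℝ) {f : K[X]}
    (hf : 2 ≤ f.natDegree) {z : K} (hz : f.escapeRadius v < v z) : v z < v (f.eval z) := by
  set d := f.natDegree
  set N := f.gaussNorm v 1
  have hlcz := lt_apply_leadingCoeff_mul_of_mul_inv_lt (ne_zero_of_natDegree_gt hf) hz
  have hN : 0 ≤ N := f.gaussNorm_nonneg v zero_le_one
  have hlcN : v f.leadingCoeff ≤ N := f.apply_coeff_le_gaussNorm v d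
  have hz1 : 1 < v z := by
    refine lt_of_mul_lt_mul_left ?_ (v.nonneg f.leadingCoeff)
    have : N ≤ d * N := le_mul_of_one_le_left hN (by norm_cast; omega)
    linarith
  have hrest : v (∑ i ∈ range d, f.coeff i * z ^ i) ≤ d * N * v z ^ (d - 1) := by
    calc v (∑ i ∈ range d, f.coeff i * z ^ i) ≤ ∑ i ∈ range d, v (f.coeff i * z ^ i) :=
          v.sum_le _ _
      _ ≤ ∑ i ∈ range d, N * v z ^ (d - 1) := by
          refine sum_le_sum fun i hi => ?_
          rw [map_mul, map_pow]
          gcongr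
          · exact f.apply_coeff_le_gaussNorm v i
          · exact hz1.le
          · have := mem_range.mp hi; omega
      _ = d * N * v z ^ (d - 1) := by simp [mul_assoc]
  have hsplit : f.eval z = (∑ i ∈ range d, f.coeff i * z ^ i) + f.leadingCoeff * z ^ d := by
    rw [eval_eq_sum_range, sum_range_succ, coeff_natDegree]
  have hpow : v z ^ d = v z * v z ^ (d - 1) := by rw [← pow_succ']; congr 1; omega
  calc v z ≤ v z ^ (d - 1) := le_self_pow₀ hz1.le (by omega)
    _ < (v f.leadingCoeff * v z - d * N) * v z ^ (d - 1) := by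
        apply lt_mul_of_one_lt_left (by positivity); linarith
    _ = v (f.leadingCoeff * z ^ d) - d * N * v z ^ (d - 1) := by
        rw [map_mul, map_pow, hpow]; ring
    _ ≤ v (f.leadingCoeff * z ^ d) - v (∑ i ∈ range d, f.coeff i * z ^ i) := by gcongr
    _ ≤ v (f.eval z) := by rw [hsplit, add_comm]; exact v.le_add _ _

theorem IsNonarchimedean.lt_apply_eval_of_nonarchEscapeRadius_lt {v : AbsoluteValue K ℝ}
    (hv : IsNonarchimedean v) {f : K[X]} (hf : 2 ≤ f.natDegree) {z : K}
    (hz : f.nonarchEscapeRadius v < v z) : v z < v (f.eval z) := by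
  set d := f.natDegree
  set N := f.gaussNorm v 1
  have hlcz := lt_apply_leadingCoeff_mul_of_mul_inv_lt (ne_zero_of_natDegree_gt hf) hz
  have hz1 : 1 < v z := by
    refine lt_of_mul_lt_mul_left ?_ (v.nonneg f.leadingCoeff)
    have := f.apply_coeff_le_gaussNorm v d
    rw [coeff_natDegree] at this
    linarith [le_max_left N 1]
  have hlead : ∀ i ∈ range (d + 1), i ≠ d →
      v (f.coeff i * z ^ i) < v (f.coeff d * z ^ d) := by
    intro i hi hid
    have hi : i + 1 ≤ d := by rw [mem_range] at hi; omega
    calc v (f.coeff i * z ^ i) = v (f.coeff i) * v z ^ i := by rw [map_mul, map_pow]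
      _ ≤ max N 1 * v z ^ i := by
          gcongr; exact (f.apply_coeff_le_gaussNorm v i).trans (le_max_left _ _)
      _ < v f.leadingCoeff * v z * v z ^ i := by gcongr
      _ = v f.leadingCoeff * v z ^ (i + 1) := by ring
      _ ≤ v f.leadingCoeff * v z ^ d := by gcongr; exact hz1.le
      _ = v (f.coeff d * z ^ d) := by rw [coeff_natDegree, map_mul, map_pow]
  have heval : v (f.eval z) = v f.leadingCoeff * v z ^ d := by
    rw [eval_eq_sum_range, hv.apply_sum_eq_of_lt (fun a => (v.map_neg a).symm)
      (self_mem_range_succ d) hlead, coeff_natDegree, map_mul, map_pow]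
  calc v z ≤ v z ^ (d - 1) := le_self_pow₀ hz1.le (by omega)
    _ < v f.leadingCoeff * v z * v z ^ (d - 1) :=
        lt_mul_of_one_lt_left (by positivity) ((le_max_right N 1).trans_lt hlcz)
    _ = v (f.eval z) := by rw [heval, mul_assoc, ← pow_succ']; congr 2; omega

namespace Height

variable [AdmissibleAbsValues K]

theorem finite_setOf_one_lt_nonarchAbsVal (x : K) :
    {v : nonarchAbsVal (K := K) | 1 < v.val x}.Finite := by
  rcases eq_or_ne x 0 with rfl | hx
  · simp only [map_zero]; norm_num
  · exact (hasFiniteMulSupport hx).subset fun v hv => hv.ne'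

theorem hasFiniteMulSupport_max_one_nonarchAbsVal (x : K) :
    (fun v : nonarchAbsVal (K := K) => max (v.val x) 1).HasFiniteMulSupport :=
  (finite_setOf_one_lt_nonarchAbsVal x).subset fun _ hv =>
    lt_of_not_ge fun h => hv (max_eq_right h)

theorem hasFiniteMulSupport_nonarchEscapeRadius (f : K[X]) (β : K) :
    (fun v : nonarchAbsVal (K := K) =>
      max (max (f.nonarchEscapeRadius v.val) (v.val β)) 1).HasFiniteMulSupport := by
  have hbad : ({v : nonarchAbsVal (K := K) | 1 < v.val β} ∪
      {v | 1 < v.val f.leadingCoeff⁻¹} ∪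
      ⋃ i ∈ range (f.natDegree + 1), {v | 1 < v.val (f.coeff i)}).Finite :=
    ((finite_setOf_one_lt_nonarchAbsVal β).union (finite_setOf_one_lt_nonarchAbsVal _)).union
      ((range _).finite_toSet.biUnion fun i _ => finite_setOf_one_lt_nonarchAbsVal _)
  refine hbad.subset fun v hv => ?_
  contrapose! hv
  simp only [Set.mem_union, Set.mem_iUnion, Set.mem_ofPred_eq, mem_range, not_or, not_exists,
    not_lt] at hv
  obtain ⟨⟨hβ, hlc⟩, hcoeff⟩ := hv
  have hN : f.gaussNorm v.val 1 ≤ 1 := by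
    obtain ⟨i, hi⟩ := f.exists_eq_gaussNorm v.val 1
    rw [hi, one_pow, mul_one]
    by_cases hid : i < f.natDegree + 1
    · exact hcoeff i hid
    · rw [coeff_eq_zero_of_natDegree_lt (by omega), map_zero]; exact zero_le_one
  have hR : f.nonarchEscapeRadius v.val ≤ 1 := by
    rw [nonarchEscapeRadius, max_eq_right hN, one_mul]; exact hlc
  simp [hR, hβ]

end Height

theorem Polynomial.finite_setOf_iterate_eval_eq [AdmissibleAbsValues K]
    [Northcott (mulHeight₁ (K := K))] {f : K[X]} (hf : 2 ≤ f.natDegree) (β : K) :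
    {α : K | ∃ k, f.eval^[k] α = β}.Finite := by
  refine (Northcott.finite_le (h := mulHeight₁ (K := K))
    ((archAbsVal.map fun v => max (max (f.escapeRadius v) (v β)) 1).prod *
      ∏ᶠ v : nonarchAbsVal, max (max (f.nonarchEscapeRadius v.val) (v.val β)) 1)).subset ?_
  rintro α ⟨k, rfl⟩
  rw [Set.mem_ofPred_eq, mulHeight₁_eq]
  gcongr
  · exact finprod_nonneg fun _ => by positivity
  · exact Multiset.prod_map_nonneg fun _ _ => by positivity
  · refine Multiset.prod_map_le_prod_map₀ _ _ (fun _ _ => by positivity) fun v _ => ?_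
    gcongr
    exact Function.le_max_apply_iterate (fun _ => v.lt_apply_eval_of_escapeRadius_lt hf) α k
  · refine finprod_le_finprod (hasFiniteMulSupport_max_one_nonarchAbsVal α)
      (fun _ => by positivity) (hasFiniteMulSupport_nonarchEscapeRadius f _) fun v => ?_
    gcongr
    exact Function.le_max_apply_iterate
      (fun _ => (isNonarchimedean _ v.prop).lt_apply_eval_of_nonarchEscapeRadius_lt hf) α k

end

theorem stmt_7 (K : Type*) [Field K] [NumberField K]
    (S : Finset (HeightOneSpectrum (NumberField.RingOfIntegers K)))
    (f : Polynomial K) (hdeg : 2 ≤ f.natDegree)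
    (hV : {α : K | ∃ (n : ℕ) (ℓ : ℤ) (a : K), 1 ≤ n ∧ ℓ ≠ 0 ∧ ℓ ≠ 1 ∧
      IsSInteger K S a ∧ (ℓ < 0 → a ≠ 0) ∧ f.eval^[n] α = a ^ ℓ * α}.Finite) :
    {α : K | ∃ (n k : ℕ) (ℓ : ℤ) (a : K), 1 ≤ n ∧ ℓ ≠ 0 ∧ ℓ ≠ 1 ∧
      IsSInteger K S a ∧ (ℓ < 0 → a ≠ 0) ∧
      f.eval^[n + k] α = a ^ ℓ * f.eval^[k] α}.Finite := by
  refine (hV.biUnion fun β _ => f.finite_setOf_iterate_eval_eq hdeg β).subset ?_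
  rintro α ⟨n, k, ℓ, a, hn, hℓ₀, hℓ₁, ha, hneg, heq⟩
  refine Set.mem_biUnion (x := f.eval^[k] α) ⟨n, ℓ, a, hn, hℓ₀, hℓ₁, ha, hneg, ?_⟩ ⟨k, rfl⟩
  rwa [← Function.iterate_add_apply]
end

section
/- Let K be a field equipped with a discrete additive valuation v : K → ℤ ∪ {∞}. Let f(X) = c_0 + c_1 X + ⋯ + c_d X^d ∈ K[X] with d ≥ 2, v(c_i) ≥ 0 for all i = 0, …, d, and v(c_d) = 0. Suppose α ∈ K, a ∈ K with v(a) ≥ 0, ℓ ≥ 0 an integer, and n ≥ 1 an integer satisfy f^(n)(α) = a^ℓ · α. Then v(α) ≥ 0. -/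
open Polynomial

/-!
If `v x < 0`, the leading term `c_d x^d` strictly dominates every other term of `f(x)`, so
`v (f x) = d • v x < v x` as `d ≥ 2`. Hence a point of negative valuation has iterates of ever
smaller valuation, whereas `v (a ^ ℓ * α) ≥ v α`.
-/

namespace AddValuation

variable {R : Type*} [Ring R] (v : AddValuation R (WithTop ℤ)) {f : R[X]}

theorem map_eval_of_neg (hcoeff : ∀ i, 0 ≤ v (f.coeff i)) (hlead : v f.leadingCoeff = 0)
    {x : R} (hx : v x < 0) : v (f.eval x) = f.natDegree • v x := by
  obtain ⟨m, hm⟩ := WithTop.ne_top_iff_exists.mp hx.ne_top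
  rw [← hm] at hx ⊢
  have hm_neg : m < 0 := WithTop.coe_lt_coe.mp hx
  have hlow : f.natDegree • (m : WithTop ℤ) <
      v (∑ i ∈ Finset.range f.natDegree, f.coeff i * x ^ i) := by
    refine v.map_lt_sum (by rw [← WithTop.coe_nsmul]; exact WithTop.coe_ne_top) fun i hi => ?_
    calc f.natDegree • (m : WithTop ℤ) < i • (m : WithTop ℤ) := by
          rw [← WithTop.coe_nsmul, ← WithTop.coe_nsmul, WithTop.coe_lt_coe]
          have hi : (i : ℤ) < f.natDegree := by exact_mod_cast Finset.mem_range.mp hi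
          simp only [nsmul_eq_mul]
          nlinarith
      _ ≤ v (f.coeff i * x ^ i) := by
          rw [v.map_mul, v.map_pow, ← hm]
          exact le_add_of_nonneg_left (hcoeff i)
  have htop : v (f.leadingCoeff * x ^ f.natDegree) = f.natDegree • (m : WithTop ℤ) := by
    rw [v.map_mul, v.map_pow, hlead, ← hm, zero_add]
  rw [eval_eq_sum_range, Finset.sum_range_succ, ← leadingCoeff,
    v.map_add_eq_of_lt_right (htop ▸ hlow), htop]

theorem map_eval_lt_of_neg (hdeg : 2 ≤ f.natDegree) (hcoeff : ∀ i, 0 ≤ v (f.coeff i))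
    (hlead : v f.leadingCoeff = 0) {x : R} (hx : v x < 0) : v (f.eval x) < v x := by
  rw [v.map_eval_of_neg hcoeff hlead hx]
  obtain ⟨m, hm⟩ := WithTop.ne_top_iff_exists.mp hx.ne_top
  rw [← hm] at hx ⊢
  rw [← WithTop.coe_nsmul, WithTop.coe_lt_coe]
  have hm_neg : m < 0 := WithTop.coe_lt_coe.mp hx
  have hdeg : (2 : ℤ) ≤ f.natDegree := by exact_mod_cast hdeg
  rw [nsmul_eq_mul]
  nlinarith

theorem map_iterate_eval_lt_of_neg (hdeg : 2 ≤ f.natDegree) (hcoeff : ∀ i, 0 ≤ v (f.coeff i))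
    (hlead : v f.leadingCoeff = 0) {x : R} (hx : v x < 0) {n : ℕ} (hn : 1 ≤ n) :
    v (f.eval^[n] x) < v x := by
  induction n, hn using Nat.le_induction with
  | base => simpa using v.map_eval_lt_of_neg hdeg hcoeff hlead hx
  | succ n _ ih =>
    rw [Function.iterate_succ_apply']
    exact (v.map_eval_lt_of_neg hdeg hcoeff hlead (ih.trans hx)).trans ih

end AddValuation

theorem stmt_16_general (K : Type*) [Field K] (v : AddValuation K (WithTop ℤ))
    (f : Polynomial K) (d : ℕ) (hd : 2 ≤ d)
    (hdeg : f.natDegree = d) (hcoeff : ∀ i, 0 ≤ v (f.coeff i))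
    (hlead : v (f.coeff d) = 0) (α a : K) (hva : 0 ≤ v a)
    (ℓ : ℤ) (hℓ : 0 ≤ ℓ) (n : ℕ) (hn : 1 ≤ n)
    (heq : f.eval^[n] α = a ^ ℓ * α) :
    0 ≤ v α := by
  subst hdeg
  by_contra! hα
  have hdecr := v.map_iterate_eval_lt_of_neg hd hcoeff hlead hα hn
  lift ℓ to ℕ using hℓ
  have hgrow : v α ≤ v (f.eval^[n] α) := by
    rw [heq, zpow_natCast, v.map_mul, v.map_pow]
    exact le_add_of_nonneg_left (nsmul_nonneg hva ℓ)
  exact (hgrow.trans_lt hdecr).false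

theorem stmt_16 (K : Type*) [Field K] (v : AddValuation K (WithTop ℤ))
    (hsurj : Function.Surjective v) (f : Polynomial K) (d : ℕ) (hd : 2 ≤ d)
    (hdeg : f.natDegree = d) (hcoeff : ∀ i, 0 ≤ v (f.coeff i))
    (hlead : v (f.coeff d) = 0) (α a : K) (hva : 0 ≤ v a)
    (ℓ : ℤ) (hℓ : 0 ≤ ℓ) (n : ℕ) (hn : 1 ≤ n)
    (heq : f.eval^[n] α = a ^ ℓ * α) :
    0 ≤ v α :=
  stmt_16_general K v f d hd hdeg hcoeff hlead α a hva ℓ hℓ n hn heq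
end

section
/- Let K be a field equipped with a discrete additive valuation v : K → ℤ ∪ {∞}. Let f ∈ K[X] be a polynomial of degree d ≥ 2 all of whose coefficients have non-negative v-valuation. Suppose n ≥ 1 is an integer, α ∈ K satisfies v(α) > 0, a ∈ K satisfies v(a) ≥ 0, and ℓ ≥ 1 is an integer such that f^(n)(α) = a^ℓ · α. Then v(f^(n)(0)) > 0. -/
/-!
Reduction modulo the maximal ideal `{x | 0 < v x}` of the valuation ring commutes with any
polynomial with integral coefficients, so `f^[n] α ≡ f^[n] 0` because `α ≡ 0`. The hypothesis
makes `f^[n] α = a ^ ℓ * α` lie in the maximal ideal, hence so does `f^[n] 0`.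
-/

open Polynomial

namespace AddValuation

variable {R Γ₀ : Type*} [CommRing R] [LinearOrderedAddCommMonoidWithTop Γ₀]
  (v : AddValuation R Γ₀) {p : R[X]} {x y : R}

theorem nonneg_eval (hp : ∀ i, 0 ≤ v (p.coeff i)) (hx : 0 ≤ v x) : 0 ≤ v (p.eval x) := by
  rw [eval_eq_sum_range]
  refine v.map_le_sum fun i _ => ?_
  rw [v.map_mul, v.map_pow]
  exact add_nonneg (hp i) (nsmul_nonneg hx i)

theorem nonneg_iterate_eval (hp : ∀ i, 0 ≤ v (p.coeff i)) (hx : 0 ≤ v x) (m : ℕ) :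
    0 ≤ v (p.eval^[m] x) := by
  induction m with
  | zero => exact hx
  | succ m ih => rw [Function.iterate_succ_apply']; exact v.nonneg_eval hp ih

theorem pos_pow_sub_pow (hx : 0 ≤ v x) (hy : 0 ≤ v y) (hxy : 0 < v (x - y)) (i : ℕ) :
    0 < v (x ^ i - y ^ i) := by
  have hgeom : 0 ≤ v (∑ j ∈ Finset.range i, x ^ j * y ^ (i - 1 - j)) := by
    refine v.map_le_sum fun j _ => ?_
    rw [v.map_mul, v.map_pow, v.map_pow]
    exact add_nonneg (nsmul_nonneg hx j) (nsmul_nonneg hy _)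
  rw [← geom_sum₂_mul, v.map_mul]
  exact hxy.trans_le (le_add_of_nonneg_left hgeom)

theorem pos_eval_sub_eval (hp : ∀ i, 0 ≤ v (p.coeff i)) (hx : 0 ≤ v x) (hy : 0 ≤ v y)
    (hxy : 0 < v (x - y)) : 0 < v (p.eval x - p.eval y) := by
  have hsum : p.eval x - p.eval y =
      ∑ i ∈ Finset.range (p.natDegree + 1), p.coeff i * (x ^ i - y ^ i) := by
    simp only [eval_eq_sum_range, ← Finset.sum_sub_distrib, mul_sub]
  rw [hsum]
  refine v.map_lt_sum' (lt_top_of_lt hxy) fun i _ => ?_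
  rw [v.map_mul]
  exact (v.pos_pow_sub_pow hx hy hxy i).trans_le (le_add_of_nonneg_left (hp i))

theorem pos_iterate_eval_sub (hp : ∀ i, 0 ≤ v (p.coeff i)) (hx : 0 ≤ v x) (hy : 0 ≤ v y)
    (hxy : 0 < v (x - y)) (m : ℕ) : 0 < v (p.eval^[m] x - p.eval^[m] y) := by
  induction m with
  | zero => exact hxy
  | succ m ih =>
    simp only [Function.iterate_succ_apply']
    exact v.pos_eval_sub_eval hp (v.nonneg_iterate_eval hp hx m)
      (v.nonneg_iterate_eval hp hy m) ih

end AddValuation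

theorem stmt_17_general (K : Type*) [Field K] (v : AddValuation K (WithTop ℤ))
    (f : Polynomial K)
    (hcoeff : ∀ i, 0 ≤ v (f.coeff i)) (n : ℕ)
    (α : K) (hα : 0 < v α) (a : K) (hva : 0 ≤ v a)
    (ℓ : ℤ) (hℓ : 1 ≤ ℓ) (heq : f.eval^[n] α = a ^ ℓ * α) :
    0 < v (f.eval^[n] (0 : K)) := by
  lift ℓ to ℕ using by omega
  have hαn : 0 < v (f.eval^[n] α) := by
    rw [heq, zpow_natCast, v.map_mul, v.map_pow]
    exact hα.trans_le (le_add_of_nonneg_left (nsmul_nonneg hva ℓ))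
  have hdiff : 0 < v (f.eval^[n] α - f.eval^[n] 0) :=
    v.pos_iterate_eval_sub hcoeff hα.le (by simp) (by simpa using hα) n
  rw [← sub_sub_cancel (f.eval^[n] α) (f.eval^[n] 0)]
  exact (lt_min hαn hdiff).trans_le (v.map_sub _ _)

theorem stmt_17 (K : Type*) [Field K] (v : AddValuation K (WithTop ℤ))
    (hsurj : Function.Surjective v) (f : Polynomial K) (hdeg : 2 ≤ f.natDegree)
    (hcoeff : ∀ i, 0 ≤ v (f.coeff i)) (n : ℕ) (hn : 1 ≤ n)
    (α : K) (hα : 0 < v α) (a : K) (hva : 0 ≤ v a)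
    (ℓ : ℤ) (hℓ : 1 ≤ ℓ) (heq : f.eval^[n] α = a ^ ℓ * α) :
    0 < v (f.eval^[n] (0 : K)) :=
  stmt_17_general K v f hcoeff n α hα a hva ℓ hℓ heq
end
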